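/- Let C(G) be the full cone over a finite graph G with cone point p, and let f be a function on C(G) with f(p) = 0. Then Γ₂ᶜ(f)(p) = Σ_{y ∈ V} Γ₁(f)(y) - ((|V| - 3)/4) Σ_{y ∈ V} f(y)² + (1/2)(Σ_{y ∈ V} f(y))². -/

import Mathlib

/-!
Every vertex of `G` is a neighbour of the cone point `p`, and each `y ∈ V` gains `p` as one extra
neighbour. With `f p = 0` this gives `Γ₁ᶜ(f)(p) = ½ Σ f²` and `Δᶜf(p) = Σ f`, while at `y ∈ V` the
cone adds `½ f(y)²` to `Γ₁` and `-f(y)` to `Δ`. Expanding `Γ₂ᶜ(f)(p)` then leaves a single term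
`Σ f Δf`, which the divergence identity turns into `-Σ Γ₁(f)`.
-/

open Finset

variable {V : Type*}

noncomputable def lap (G : SimpleGraph V) [∀ v, Fintype (G.neighborSet v)] (f : V → ℝ) (x : V) : ℝ :=
  ∑ y ∈ G.neighborFinset x, (f y - f x)

noncomputable def gam (G : SimpleGraph V) [∀ v, Fintype (G.neighborSet v)] (f g : V → ℝ) (x : V) : ℝ :=
  (1/2) * ∑ y ∈ G.neighborFinset x, (f y - f x) * (g y - g x)

noncomputable def gam1 (G : SimpleGraph V) [∀ v, Fintype (G.neighborSet v)] (f : V → ℝ) (x : V) : ℝ :=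
  (1/2) * ∑ y ∈ G.neighborFinset x, (f y - f x)^2

noncomputable def gam2 (G : SimpleGraph V) [∀ v, Fintype (G.neighborSet v)] (f : V → ℝ) (x : V) : ℝ :=
  (1/2) * (lap G (gam1 G f) x - 2 * gam G f (lap G f) x)

def cone (G : SimpleGraph V) : SimpleGraph (Option V) where
  Adj a b := a ≠ b ∧ ∀ x ∈ a, ∀ y ∈ b, G.Adj x y
  symm := ⟨fun _ _ h => ⟨h.1.symm, fun x hx y hy => (h.2 y hy x hx).symm⟩⟩
  loopless := ⟨fun _ h => h.1 rfl⟩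

instance (G : SimpleGraph V) [DecidableEq V] [DecidableRel G.Adj] :
    DecidableRel (cone G).Adj := fun a b =>
  inferInstanceAs (Decidable (a ≠ b ∧ ∀ x ∈ a, ∀ y ∈ b, G.Adj x y))

section Divergence

variable (G : SimpleGraph V) [Fintype V] [DecidableRel G.Adj]

open Matrix in
lemma lap_eq_neg_lapMatrix_mulVec [DecidableEq V] (g : V → ℝ) :
    lap G g = -(G.lapMatrix ℝ *ᵥ g) := by
  ext v
  simp [lap, SimpleGraph.lapMatrix_mulVec_apply, sum_sub_distrib]

lemma sum_mul_lap_eq_neg_sum_gam1 (g : V → ℝ) : ∑ v, g v * lap G g v = -∑ v, gam1 G g v := by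
  classical
  have hquad := SimpleGraph.lapMatrix_toLinearMap₂' ℝ G g
  rw [Matrix.toLinearMap₂'_apply'] at hquad
  simp only [lap_eq_neg_lapMatrix_mulVec, Pi.neg_apply, mul_neg, sum_neg_distrib, neg_inj]
  rw [← dotProduct, hquad]
  simp only [gam1, SimpleGraph.neighborFinset_eq_filter, sum_filter, ← mul_sum]
  rw [div_eq_inv_mul, one_div]
  congr 1
  refine sum_congr rfl fun v _ => sum_congr rfl fun y _ => ?_
  split_ifs <;> ring

end Divergence

section Cone

variable (G : SimpleGraph V)

@[simp]
lemma cone_adj_none_some (v : V) : (cone G).Adj none (some v) := by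
  simp [cone]

@[simp]
lemma cone_adj_some_some (v w : V) : (cone G).Adj (some v) (some w) ↔ G.Adj v w := by
  simpa [cone] using G.ne_of_adj

variable [Fintype V] [DecidableEq V] [DecidableRel G.Adj]

lemma cone_neighborFinset_none :
    (cone G).neighborFinset none = univ.map Function.Embedding.some := by
  ext (_ | w) <;> simp

lemma cone_neighborFinset_some (v : V) :
    (cone G).neighborFinset (some v) = insert none ((G.neighborFinset v).map .some) := by
  ext (_ | w) <;> simp [(cone G).adj_comm _ none]

lemma sum_cone_neighborFinset_none (h : Option V → ℝ) :
    ∑ y ∈ (cone G).neighborFinset none, h y = ∑ v, h (some v) := by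
  rw [cone_neighborFinset_none, sum_map]
  rfl

lemma sum_cone_neighborFinset_some (v : V) (h : Option V → ℝ) :
    ∑ y ∈ (cone G).neighborFinset (some v), h y = h none + ∑ y ∈ G.neighborFinset v, h (some y) := by
  rw [cone_neighborFinset_some, sum_insert (by simp), sum_map]
  rfl

variable (f : Option V → ℝ)

lemma lap_cone_none : lap (cone G) f none = ∑ v, (f (some v) - f none) :=
  sum_cone_neighborFinset_none G _

lemma gam_cone_none (k : Option V → ℝ) :
    gam (cone G) f k none = (1/2) * ∑ v, (f (some v) - f none) * (k (some v) - k none) := by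
  rw [gam, sum_cone_neighborFinset_none]

lemma gam1_cone_none : gam1 (cone G) f none = (1/2) * ∑ v, (f (some v) - f none)^2 := by
  rw [gam1, sum_cone_neighborFinset_none]

lemma lap_cone_some (v : V) :
    lap (cone G) f (some v) = (f none - f (some v)) + lap G (fun z => f (some z)) v :=
  sum_cone_neighborFinset_some G v _

lemma gam1_cone_some (v : V) :
    gam1 (cone G) f (some v)
      = (1/2) * (f none - f (some v))^2 + gam1 G (fun z => f (some z)) v := by
  rw [gam1, sum_cone_neighborFinset_some, gam1, mul_add]

end Cone

theorem stmt6 (G : SimpleGraph V) [Fintype V] [DecidableEq V] [DecidableRel G.Adj]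
    (f : Option V → ℝ) (hf : f none = 0) :
    gam2 (cone G) f none
      = ∑ y : V, gam1 G (fun z => f (some z)) y
        - ((Fintype.card V : ℝ) - 3) / 4 * ∑ y : V, (f (some y))^2
        + (1/2) * (∑ y : V, f (some y))^2 := by
  set g : V → ℝ := fun z => f (some z)
  have hlap_gam1 : lap (cone G) (gam1 (cone G) f) none
      = ∑ y, gam1 G g y + (1/2) * ∑ y, g y ^ 2 - Fintype.card V * ((1/2) * ∑ y, g y ^ 2) := by
    simp only [lap_cone_none, gam1_cone_some, gam1_cone_none, hf, zero_sub, sub_zero, neg_sq,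
      sum_sub_distrib, sum_add_distrib, ← mul_sum, sum_const, card_univ, nsmul_eq_mul]
    ring
  have hgam_lap : gam (cone G) f (lap (cone G) f) none
      = (1/2) * (-∑ y, gam1 G g y - ∑ y, g y ^ 2 - (∑ y, g y) ^ 2) := by
    simp only [gam_cone_none, lap_cone_some, lap_cone_none, hf, sub_zero, zero_sub, mul_add,
      mul_sub, mul_neg, sum_add_distrib, sum_sub_distrib, sum_neg_distrib, ← sum_mul, ← sq,
      sum_mul_lap_eq_neg_sum_gam1]
    ring
  rw [gam2, hlap_gam1, hgam_lap]
  ring
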